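/- Assume conditions (A1)-(A3) hold. There exist r̃₀ ∈ (0,1/2] and c > 0, depending only on the bounds in (A1)-(A3), such that for every x₀ ∈ ℝ^d, every r ∈ (0, r̃₀), every i ∈ M, and every x ∈ B(x₀, r/2), one has E_{x,i}( τ_{B(x₀,r)} ∧ τ₁ ) ≥ c r², where τ₁ = inf{t > 0 : Λ_t ≠ Λ₀} is the first switching time. -/

import Mathlib

open MeasureTheory Set Filter
open scoped ENNReal NNReal Classical

noncomputable section

/-- Euclidean space `ℝ^d`. -/
abbrev Rd (d : ℕ) := EuclideanSpace ℝ (Fin d)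

/-- The non-local operator
`L f(x) = Σ a_{kl} ∂²f/∂x_k∂x_l + Σ b_k ∂f/∂x_k + ∫ (f(x+z) − f(x) − ∇f(x)·z 1_{|z|<1}) π(x,dz)`. -/
def Lop {d : ℕ} (a : Rd d → Matrix (Fin d) (Fin d) ℝ) (b : Rd d → Rd d)
    (π : Rd d → Measure (Rd d)) (f : Rd d → ℝ) (x : Rd d) : ℝ :=
  (∑ k : Fin d, ∑ l : Fin d, a x k l *
      fderiv ℝ (fun y => fderiv ℝ f y (EuclideanSpace.single l (1:ℝ))) x
        (EuclideanSpace.single k (1:ℝ)))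
    + (∑ k : Fin d, b x k * fderiv ℝ f x (EuclideanSpace.single k (1:ℝ)))
    + ∫ z, (f (x + z) - f x - (if ‖z‖ < 1 then fderiv ℝ f x z else 0)) ∂(π x)

/-- The coefficient matrix `a(x,i) = σ(x,i) σ(x,i)'`. -/
def amat {d m : ℕ} (σm : Rd d → Fin m → Matrix (Fin d) (Fin d) ℝ) (x : Rd d) (i : Fin m) :
    Matrix (Fin d) (Fin d) ℝ :=
  σm x i * (σm x i).transpose

/-- The generator `G f(x,i) = L_i f(x,i) + Σ_j q_{ij}(x) f(x,j)` of the switching jump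
diffusion (with a possibly sub-Markovian matrix `Q(x) = (q_{ij}(x))`). -/
def Gop {d m : ℕ} (σm : Rd d → Fin m → Matrix (Fin d) (Fin d) ℝ)
    (b : Rd d → Fin m → Rd d) (π : Fin m → Rd d → Measure (Rd d))
    (q : Fin m → Fin m → Rd d → ℝ) (f : Rd d → Fin m → ℝ) (x : Rd d) (i : Fin m) : ℝ :=
  Lop (fun y => amat σm y i) (fun y => b y i) (π i) (fun y => f y i) x
    + ∑ j, q i j x * f x j

/-- The conservative (Markovian) generator `Ḡ` obtained from `G` by replacing `Q(x)` with the
Markovian matrix `Q̄(x)` (`q̄_{ij} = q_{ij}` for `i ≠ j`, rows summing to zero), cf. Remark 2.2: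
the process with sub-Markovian `Q` is the subprocess of the `Ḡ`-process killed at rate
`κ(x,i) = −Σ_j q_{ij}(x)`. -/
def Gbar {d m : ℕ} (σm : Rd d → Fin m → Matrix (Fin d) (Fin d) ℝ)
    (b : Rd d → Fin m → Rd d) (π : Fin m → Rd d → Measure (Rd d))
    (q : Fin m → Fin m → Rd d → ℝ) (f : Rd d → Fin m → ℝ) (x : Rd d) (i : Fin m) : ℝ :=
  Lop (fun y => amat σm y i) (fun y => b y i) (π i) (fun y => f y i) x
    + ∑ j ∈ Finset.univ.erase i, q i j x * (f x j - f x i)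

/-- The switched Markov process `(X_t, Λ_t)` associated with the generator `G`, under
conditions (A1)-(A3).  Following Remark 2.2, the underlying path process is conservative and
solves the martingale problem for the Markovian generator `Ḡ`; the (possibly sub-Markovian)
process itself is its subprocess killed at rate `κ(x,i) = −Σ_j q_{ij}(x)` (see `SwitchJD.life`
below). -/
structure SwitchJD (d m : ℕ) (Ω : Type) [mΩ : MeasurableSpace Ω] where
  X : ℝ → Ω → Rd d
  Λ : ℝ → Ω → Fin m
  P : Rd d → Fin m → Measure Ω
  F : Filtration ℝ≥0 mΩ
  σm : Rd d → Fin m → Matrix (Fin d) (Fin d) ℝ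
  b : Rd d → Fin m → Rd d
  π : Fin m → Rd d → Measure (Rd d)
  q : Fin m → Fin m → Rd d → ℝ
  isProb : ∀ x i, IsProbabilityMeasure (P x i)
  measX : ∀ t, Measurable (X t)
  measΛ : ∀ t, Measurable (Λ t)
  adapted : Adapted F (fun (t : ℝ≥0) ω => (X (t : ℝ) ω, Λ (t : ℝ) ω))
  start : ∀ x i, P x i {ω | X 0 ω = x ∧ Λ 0 ω = i} = 1
  right_cont : ∀ ω t, ContinuousWithinAt (fun s => X s ω) (Ici t) t
  left_lim : ∀ ω t, ∃ L, Tendsto (fun s => X s ω) (nhdsWithin t (Iio t)) (nhds L)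
  right_contΛ : ∀ ω t, ∃ ε > 0, ∀ s ∈ Ico t (t + ε), Λ s ω = Λ t ω
  A1σ_cont : ∀ i k l, Continuous fun x => σm x i k l
  A1σ_bdd : ∀ i, ∃ K : ℝ, ∀ x k l, |σm x i k l| ≤ K
  A1b_cont : ∀ i, Continuous fun x => b x i
  A1b_bdd : ∀ i, ∃ K : ℝ, ∀ x, ‖b x i‖ ≤ K
  A1q_meas : ∀ i j, Measurable (q i j)
  A1q_bdd : ∀ i j, ∃ K : ℝ, ∀ x, |q i j x| ≤ K
  q_nonneg : ∀ i j x, i ≠ j → 0 ≤ q i j x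
  q_row : ∀ i x, ∑ j, q i j x ≤ 0
  A2 : ∃ κ₀ : ℝ, 0 < κ₀ ∧ κ₀ ≤ 1 ∧ ∀ (x : Rd d) (i : Fin m) (ξ : Rd d),
      κ₀ * ‖ξ‖ ^ 2 ≤ ∑ k, ∑ l, amat σm x i k l * ξ k * ξ l ∧
      ∑ k, ∑ l, amat σm x i k l * ξ k * ξ l ≤ κ₀⁻¹ * ‖ξ‖ ^ 2
  A3 : ∃ Pi : Measure (Rd d), (∀ i x, π i x ≤ Pi) ∧
      ∫⁻ z, ENNReal.ofReal (min 1 (‖z‖ ^ 2)) ∂Pi < ⊤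
  mart : ∀ f : Rd d → Fin m → ℝ, (∀ i, ContDiff ℝ 2 fun x => f x i) →
      (∃ Kf : ℝ, ∀ x i, |f x i| + ‖fderiv ℝ (fun y => f y i) x‖ +
          ‖fderiv ℝ (fderiv ℝ fun y => f y i) x‖ ≤ Kf) →
      ∀ x i, Martingale
        (fun (t : ℝ≥0) ω => f (X (t : ℝ) ω) (Λ (t : ℝ) ω) -
          ∫ s in Ioc (0:ℝ) (t : ℝ), Gbar σm b π q f (X s ω) (Λ s ω))
        F (P x i)

/-- The standard exponential distribution (law of the auxiliary killing variable `η`). -/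
def expM : Measure ℝ :=
  (volume.restrict (Ioi (0:ℝ))).withDensity fun u => ENNReal.ofReal (Real.exp (-u))

/-- First exit time of `X` from `D` (with value `∞` if `X` never leaves `D`). -/
def exitT {d : ℕ} {Ω : Type} (X : ℝ → Ω → Rd d) (D : Set (Rd d)) (ω : Ω) : ℝ≥0∞ :=
  sInf (ENNReal.ofReal '' {t : ℝ | 0 ≤ t ∧ X t ω ∉ D})

variable {d m : ℕ} {Ω : Type} [MeasurableSpace Ω]

/-- The lifetime `ζ` of the switched process: the underlying conservative path `(X, Λ)` is
killed at rate `κ(x,i) = −Σ_j q_{ij}(x)`, using an independent mean-one exponential variable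
`η = p.2`. -/
def SwitchJD.life (S : SwitchJD d m Ω) (p : Ω × ℝ) : ℝ≥0∞ :=
  sInf (ENNReal.ofReal '' {t : ℝ | 0 < t ∧
    p.2 < ∫ s in Ioc (0:ℝ) t, -(∑ j, S.q (S.Λ s p.1) j (S.X s p.1))})

/-- The first switching time `τ₁ = inf{t > 0 : Λ_t ≠ Λ_0}`. -/
def SwitchJD.switchT (S : SwitchJD d m Ω) (ω : Ω) : ℝ≥0∞ :=
  sInf (ENNReal.ofReal '' {t : ℝ | 0 < t ∧ S.Λ t ω ≠ S.Λ 0 ω})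

/-- `E_{x,i}[ g(X_{τ_D}, Λ_{τ_D}) ; τ_D < ∞ ]` for the switched process (with the convention
that any function vanishes at the cemetery point `∂`, i.e. on `{τ_D ≥ ζ}`). -/
def SwitchJD.stopExp (S : SwitchJD d m Ω) (g : Rd d → Fin m → ℝ) (D : Set (Rd d))
    (x : Rd d) (i : Fin m) : ℝ :=
  ∫ p, (if exitT S.X D p.1 < S.life p then
      g (S.X (exitT S.X D p.1).toReal p.1) (S.Λ (exitT S.X D p.1).toReal p.1) else 0)
    ∂((S.P x i).prod expM)

/-- First exit time of the pair `(X_t, Λ_t)` from `V ⊆ ℝ^d × M`, `V` being encoded by its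
sections `V i ⊆ ℝ^d`. -/
def exitVP (X : ℝ → Ω → Rd d) (Λ : ℝ → Ω → Fin m) (V : Fin m → Set (Rd d)) (ω : Ω) : ℝ≥0∞ :=
  sInf (ENNReal.ofReal '' {t : ℝ | 0 ≤ t ∧ X t ω ∉ V (Λ t ω)})

/-- `f` is `G`-harmonic in `U = D × M`: for every relatively compact open `V ⊆ U`,
`f(x,i) = E_{x,i}[f(X_{τ_V}, Λ_{τ_V})]` for all `(x,i) ∈ V`. -/
def SwitchJD.Harmonic (S : SwitchJD d m Ω) (f : Rd d → Fin m → ℝ) (D : Set (Rd d)) : Prop :=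
  ∀ V : Fin m → Set (Rd d), (∀ i, IsOpen (V i)) → (∀ i, IsCompact (closure (V i))) →
    (∀ i, closure (V i) ⊆ D) →
    ∀ x i, x ∈ V i →
      f x i = ∫ p, (if exitVP S.X S.Λ V p.1 < S.life p then
          f (S.X (exitVP S.X S.Λ V p.1).toReal p.1) (S.Λ (exitVP S.X S.Λ V p.1).toReal p.1)
        else 0) ∂((S.P x i).prod expM)

/-- The matrix `Q(x) = (q_{ij}(x))` is irreducible on `D`: for any `i, j` there are
`n ≥ 1` and `Λ₀ = i, Λ₁, …, Λ_n = j` with `Λ_{k−1} ≠ Λ_k` such that each set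
`{x ∈ D : q_{Λ_{k−1} Λ_k}(x) > 0}` has positive Lebesgue measure. -/
def QIrreducible {d m : ℕ} (q : Fin m → Fin m → Rd d → ℝ) (D : Set (Rd d)) : Prop :=
  ∀ i j : Fin m, ∃ n : ℕ, 0 < n ∧ ∃ c : Fin (n + 1) → Fin m,
    c 0 = i ∧ c (Fin.last n) = j ∧ (∀ k : Fin n, c k.castSucc ≠ c k.succ) ∧
    ∀ k : Fin n, 0 < volume {x ∈ D | 0 < q (c k.castSucc) (c k.succ) x}

/-- `G` (i.e. `Q`) is strictly irreducible on `D`: for `i ≠ j`, `inf_D q_{ij} ≥ q⁰_{ij} > 0`. -/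
def StrictIrred {d m : ℕ} (q : Fin m → Fin m → Rd d → ℝ) (D : Set (Rd d)) : Prop :=
  ∀ i j : Fin m, i ≠ j → ∃ q0 : ℝ, 0 < q0 ∧ ∀ x ∈ D, q0 ≤ q i j x

end

/-!
Take a cutoff `χ` vanishing on `B(x₀, r/2)`, equal to `1` off `B(x₀, 3r/4)`, whose first and
second derivatives are `O(1/r)` and `O(1/r²)`, and let `g = χ` in the starting regime `i` and
`g = 1` in every other regime. Then `|Ḡ g| ≤ K = O(1/r²)`, so by the martingale problem
`N_t = g(X_t, Λ_t) - ∫₀ᵗ Ḡ g(X_s, Λ_s) ds` is a martingale with `N_0 = 0` and `N ≥ -1/4` at time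
`t₁ = 1/(4K)`. Doob's maximal inequality along rational times bounds the probability that `N`
reaches `3/4` before `t₁` by `1/3`. Off that event `g(X_q, Λ_q) < 1` at all rational `q ≤ t₁`,
i.e. the process is still in regime `i` and in `B(x₀, 3r/4)`; by right-continuity it then neither
leaves `B(x₀, r)` nor switches before `t₁`. Hence `E(τ ∧ τ₁) ≥ (2/3) t₁`, which is of order `r²`.
-/

section Calculus

variable {E F : Type*} [NormedAddCommGroup E] [NormedSpace ℝ E]
  [NormedAddCommGroup F] [NormedSpace ℝ F]

lemma differentiable_fderiv_of_contDiff_two {f : E → F} (hf : ContDiff ℝ 2 f) :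
    Differentiable ℝ (fderiv ℝ f) :=
  (hf.fderiv_right (m := 1) (by norm_num)).differentiable one_ne_zero

lemma fderiv_fderiv_apply {f : E → F} (hf : ContDiff ℝ 2 f) (x v w : E) :
    fderiv ℝ (fun y => fderiv ℝ f y v) x w = fderiv ℝ (fderiv ℝ f) x w v := by
  rw [fderiv_clm_apply (differentiable_fderiv_of_contDiff_two hf x) (differentiableAt_const v)]
  simp

lemma norm_sub_sub_fderiv_le {f : E → F} (hf : ContDiff ℝ 2 f) {C : ℝ}
    (hC : ∀ y, ‖fderiv ℝ (fderiv ℝ f) y‖ ≤ C) (x z : E) :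
    ‖f (x + z) - f x - fderiv ℝ f x z‖ ≤ C * ‖z‖ ^ 2 := by
  have hf' : ∀ y, DifferentiableAt ℝ f y := fun y => hf.differentiable two_ne_zero y
  have hlip : ∀ y ∈ Metric.closedBall x ‖z‖, ‖fderiv ℝ f y - fderiv ℝ f x‖ ≤ C * ‖z‖ := by
    intro y hy
    calc ‖fderiv ℝ f y - fderiv ℝ f x‖ ≤ C * ‖y - x‖ :=
          convex_univ.norm_image_sub_le_of_norm_fderiv_le
            (fun w _ => differentiable_fderiv_of_contDiff_two hf w) (fun w _ => hC w)
            (mem_univ x) (mem_univ y)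
      _ ≤ C * ‖z‖ := by
          gcongr
          · exact (norm_nonneg (fderiv ℝ (fderiv ℝ f) x)).trans (hC x)
          · simpa [dist_eq_norm] using hy
  have := (convex_closedBall x ‖z‖).norm_image_sub_le_of_norm_fderiv_le' (fun y _ => hf' y) hlip
    (Metric.mem_closedBall_self (norm_nonneg z)) (y := x + z) (by simp [dist_eq_norm])
  simpa [pow_two, mul_assoc] using this

lemma fderiv_comp_smul_sub {u : E → F} (hu : Differentiable ℝ u) (x₀ : E) (c : ℝ) :
    fderiv ℝ (fun y => u (c • (y - x₀))) = fun y => c • fderiv ℝ u (c • (y - x₀)) := by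
  funext y
  have h : HasFDerivAt (fun y => u (c • (y - x₀)))
      ((fderiv ℝ u (c • (y - x₀))).comp (c • ContinuousLinearMap.id ℝ E)) y :=
    (hu _).hasFDerivAt.comp y (((hasFDerivAt_id y).sub_const x₀).const_smul c)
  rw [h.fderiv]
  ext v
  simp

end Calculus

section Cutoff

variable {E F : Type*} [NormedAddCommGroup E] [NormedSpace ℝ E]
  [NormedAddCommGroup F] [NormedSpace ℝ F]

lemma norm_fderiv_rescale_le {u : E → F} (hu : ContDiff ℝ 2 u) {B : ℝ}
    (h1 : ∀ v, ‖fderiv ℝ u v‖ ≤ B) (h2 : ∀ v, ‖fderiv ℝ (fderiv ℝ u) v‖ ≤ B)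
    (x₀ : E) {r : ℝ} (hr : 0 < r) (y : E) :
    ‖fderiv ℝ (fun y => u (r⁻¹ • (y - x₀))) y‖ ≤ B / r ∧
      ‖fderiv ℝ (fderiv ℝ fun y => u (r⁻¹ • (y - x₀))) y‖ ≤ B / r ^ 2 := by
  have hd1 := fderiv_comp_smul_sub (hu.differentiable two_ne_zero) x₀ r⁻¹
  have hd2 := fderiv_comp_smul_sub
    ((differentiable_fderiv_of_contDiff_two hu).const_smul r⁻¹) x₀ r⁻¹
  have hd2' : fderiv ℝ (r⁻¹ • fderiv ℝ u) = r⁻¹ • fderiv ℝ (fderiv ℝ u) := by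
    funext v
    exact fderiv_const_smul (differentiable_fderiv_of_contDiff_two hu v) r⁻¹
  have hr' : |r⁻¹| = r⁻¹ := abs_of_pos (inv_pos.2 hr)
  rw [hd1]
  refine ⟨?_, ?_⟩
  · rw [norm_smul, Real.norm_eq_abs, hr', inv_mul_eq_div]
    exact div_le_div_of_nonneg_right (h1 _) hr.le
  · change ‖fderiv ℝ (fun y => (r⁻¹ • fderiv ℝ u) (r⁻¹ • (y - x₀))) y‖ ≤ B / r ^ 2
    rw [hd2, hd2']
    simp only [Pi.smul_apply, smul_smul]
    calc ‖(r⁻¹ * r⁻¹) • fderiv ℝ (fderiv ℝ u) (r⁻¹ • (y - x₀))‖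
        ≤ ‖r⁻¹ * r⁻¹‖ * ‖fderiv ℝ (fderiv ℝ u) (r⁻¹ • (y - x₀))‖ :=
          ContinuousLinearMap.opNorm_smul_le _ _
      _ ≤ ‖r⁻¹ * r⁻¹‖ * B := by gcongr; exact h2 _
      _ = B / r ^ 2 := by
          rw [Real.norm_eq_abs, abs_of_pos (by positivity)]
          field_simp

variable [FiniteDimensional ℝ E]

lemma exists_cutoff : ∃ B : ℝ, 1 ≤ B ∧ ∀ (x₀ : E) (r : ℝ), 0 < r →
    ∃ χ : E → ℝ, ContDiff ℝ 2 χ ∧ EqOn χ 0 (Metric.closedBall x₀ (r / 2)) ∧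
      EqOn χ 1 (Metric.ball x₀ (3 * r / 4))ᶜ ∧ (∀ y, χ y ∈ Icc 0 1) ∧
      (∀ y, ‖fderiv ℝ χ y‖ ≤ B / r) ∧ ∀ y, ‖fderiv ℝ (fderiv ℝ χ) y‖ ≤ B / r ^ 2 := by
  let φ : ContDiffBump (0 : E) := ⟨1 / 2, 3 / 4, by norm_num, by norm_num⟩
  have hφ : ContDiff ℝ (⊤ : ℕ∞) φ := φ.contDiff
  have hφ2 : ContDiff ℝ 2 φ := φ.contDiff
  obtain ⟨B₁, hB₁⟩ : ∃ C, ∀ v, ‖fderiv ℝ φ v‖ ≤ C :=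
    HasCompactSupport.exists_bound_of_continuous (φ.hasCompactSupport.fderiv ℝ)
      (hφ.continuous_fderiv (by simp))
  obtain ⟨B₂, hB₂⟩ : ∃ C, ∀ v, ‖fderiv ℝ (fderiv ℝ φ) v‖ ≤ C :=
    HasCompactSupport.exists_bound_of_continuous (E := E →L[ℝ] E →L[ℝ] ℝ)
      ((φ.hasCompactSupport.fderiv ℝ).fderiv ℝ)
      ((hφ2.fderiv_right (m := 1) (by norm_num)).continuous_fderiv one_ne_zero)
  let u : E → ℝ := fun v => 1 - φ v
  have hu : ContDiff ℝ 2 u := contDiff_const.sub hφ2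
  have hdu : fderiv ℝ u = -fderiv ℝ φ := funext fun v => fderiv_const_sub 1
  refine ⟨max 1 (max B₁ B₂), le_max_left _ _, fun x₀ r hr => ?_⟩
  have hbounds := norm_fderiv_rescale_le (B := max 1 (max B₁ B₂)) hu
    (fun v => by rw [hdu, Pi.neg_apply, norm_neg]; exact (hB₁ v).trans (by simp))
    (fun v => by
      rw [hdu, fderiv_neg, norm_neg (fderiv ℝ (fderiv ℝ φ) v)]
      exact (hB₂ v).trans (by simp))
    x₀ hr
  have hscale : ∀ y, ‖r⁻¹ • (y - x₀)‖ = dist y x₀ / r := fun y => by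
    rw [norm_smul, norm_inv, Real.norm_eq_abs, abs_of_pos hr, dist_eq_norm, inv_mul_eq_div]
  refine ⟨fun y => u (r⁻¹ • (y - x₀)), hu.comp ((contDiff_id.sub contDiff_const).const_smul _),
    fun y hy => ?_, fun y hy => ?_, fun y => ?_, fun y => (hbounds y).1, fun y => (hbounds y).2⟩
  · have : φ (r⁻¹ • (y - x₀)) = 1 := by
      apply φ.one_of_mem_closedBall
      rw [Metric.mem_closedBall, dist_zero_right, hscale, div_le_iff₀ hr]
      have : dist y x₀ ≤ r / 2 := hy
      change _ ≤ 1 / 2 * r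
      linarith
    simp [u, this]
  · have : φ (r⁻¹ • (y - x₀)) = 0 := by
      apply φ.zero_of_le_dist
      rw [dist_zero_right, hscale, le_div_iff₀ hr]
      have : 3 * r / 4 ≤ dist y x₀ := by simpa using hy
      change 3 / 4 * r ≤ _
      linarith
    simp [u, this]
  · exact ⟨sub_nonneg.2 φ.le_one, sub_le_self _ φ.nonneg⟩

end Cutoff

lemma Finset.exists_monotone_nat_enum {ι : Type*} [LinearOrder ι] (T : Finset ι) {t : ι}
    (hT : ∀ s ∈ T, s ≤ t) :
    ∃ σ : ℕ → ι, Monotone σ ∧ (∀ n, σ n ≤ t) ∧ ∀ s ∈ T, ∃ n, σ n = s := by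
  let e := T.orderEmbOfFin rfl
  let σ : ℕ → ι := fun n => if h : n < T.card then e ⟨n, h⟩ else t
  have hσt : ∀ n, σ n ≤ t := fun n => by
    by_cases h : n < T.card
    · simpa [σ, h] using hT _ (T.orderEmbOfFin_mem rfl ⟨n, h⟩)
    · simp [σ, h]
  refine ⟨σ, monotone_nat_of_le_succ fun n => ?_, hσt, fun s hs => ?_⟩
  · by_cases h : n + 1 < T.card
    · simp only [σ, h, (Nat.lt_succ_self n).trans h, dite_true]
      exact e.monotone (Fin.mk_le_mk.2 n.le_succ)
    · simpa [σ, h] using hσt n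
  · obtain ⟨j, rfl⟩ : s ∈ Set.range e := by rwa [Finset.range_orderEmbOfFin]
    exact ⟨j, by simp [σ, j.2]⟩

namespace MeasureTheory

variable {Ω ι : Type*} {mΩ : MeasurableSpace Ω} {μ : Measure Ω}

def Filtration.sample [Preorder ι] (F : Filtration ι mΩ) {τ : ℕ → ι} (hτ : Monotone τ) :
    Filtration ℕ mΩ :=
  ⟨fun k => F (τ k), fun _ _ hkl => F.mono (hτ hkl), fun _ => F.le _⟩

lemma Submartingale.sample [Preorder ι] {F : Filtration ι mΩ} {Y : ι → Ω → ℝ}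
    (hY : Submartingale Y F μ) {τ : ℕ → ι} (hτ : Monotone τ) :
    Submartingale (fun k => Y (τ k)) (F.sample hτ) μ :=
  ⟨fun k => hY.1 (τ k), fun _ _ hkl => hY.2.1 _ _ (hτ hkl), fun _ => hY.integrable _⟩

lemma Submartingale.mul_measure_exists_ge_le_of_monotone [IsFiniteMeasure μ] [Preorder ι]
    {F : Filtration ι mΩ} {Y : ι → Ω → ℝ} (hY : Submartingale Y F μ) (hnonneg : 0 ≤ Y) {τ : ℕ → ι}
    (hτ : Monotone τ) {t : ι} (hτt : ∀ k, τ k ≤ t) (ε : ℝ≥0) :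
    ε * μ {ω | ∃ k, (ε : ℝ) ≤ Y (τ k) ω} ≤ ENNReal.ofReal (∫ ω, Y t ω ∂μ) := by
  let A : ℕ → Set Ω := fun n => {ω | (ε : ℝ) ≤
    (Finset.range (n + 1)).sup' Finset.nonempty_range_add_one fun k => Y (τ k) ω}
  have hA : Monotone A := fun n n' hn ω (hω : (ε : ℝ) ≤ _) =>
    hω.trans (Finset.sup'_mono (fun k => Y (τ k) ω)
      (Finset.range_subset_range.2 (Nat.succ_le_succ hn)) Finset.nonempty_range_add_one)
  have hsub : {ω | ∃ k, (ε : ℝ) ≤ Y (τ k) ω} ⊆ ⋃ n, A n := fun ω ⟨k, hk⟩ =>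
    mem_iUnion.2 ⟨k, hk.trans (Finset.le_sup' (fun j => Y (τ j) ω) (by simp))⟩
  calc ε * μ {ω | ∃ k, (ε : ℝ) ≤ Y (τ k) ω} ≤ ε * μ (⋃ n, A n) := by gcongr
    _ = ⨆ n, ε * μ (A n) := by rw [hA.measure_iUnion, ENNReal.mul_iSup]
    _ ≤ ENNReal.ofReal (∫ ω, Y t ω ∂μ) := iSup_le fun n => by
        refine (maximal_ineq (hY.sample hτ) (fun k => hnonneg (τ k)) n).trans ?_
        refine ENNReal.ofReal_le_ofReal ((setIntegral_le_integral (hY.integrable _)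
          (Eventually.of_forall fun ω => hnonneg _ ω)).trans ?_)
        simpa using hY.setIntegral_le (hτt n) MeasurableSet.univ

lemma Submartingale.mul_measure_exists_ge_le [IsFiniteMeasure μ] [LinearOrder ι]
    {F : Filtration ι mΩ} {Y : ι → Ω → ℝ} (hY : Submartingale Y F μ) (hnonneg : 0 ≤ Y)
    {κ : Type*} [Countable κ] {τ : κ → ι} {t : ι} (hτt : ∀ k, τ k ≤ t) (ε : ℝ≥0) :
    ε * μ {ω | ∃ k, (ε : ℝ) ≤ Y (τ k) ω} ≤ ENNReal.ofReal (∫ ω, Y t ω ∂μ) := by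
  let A : Finset κ → Set Ω := fun s => {ω | ∃ k ∈ s, (ε : ℝ) ≤ Y (τ k) ω}
  have hA : Directed (· ⊆ ·) A := by
    intro s s'
    refine ⟨s ∪ s', ?_, ?_⟩ <;> rintro ω ⟨k, hk, h⟩
    exacts [⟨k, Finset.mem_union_left _ hk, h⟩, ⟨k, Finset.mem_union_right _ hk, h⟩]
  have hunion : {ω | ∃ k, (ε : ℝ) ≤ Y (τ k) ω} = ⋃ s, A s := by
    ext ω
    simp only [mem_iUnion, A]
    exact ⟨fun ⟨k, hk⟩ => ⟨{k}, k, Finset.mem_singleton_self k, hk⟩,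
      fun ⟨_, k, _, hk⟩ => ⟨k, hk⟩⟩
  rw [hunion, hA.measure_iUnion, ENNReal.mul_iSup]
  refine iSup_le fun s => ?_
  obtain ⟨σ, hσ, hσt, hσs⟩ := (s.image τ).exists_monotone_nat_enum (t := t)
    (by simpa using fun k _ => hτt k)
  refine le_trans ?_ (hY.mul_measure_exists_ge_le_of_monotone hnonneg hσ hσt ε)
  gcongr
  rintro ω ⟨k, hk, h⟩
  obtain ⟨n, hn⟩ := hσs (τ k) (Finset.mem_image_of_mem τ hk)
  exact ⟨n, hn ▸ h⟩

lemma Martingale.mul_measure_exists_ge_le [IsProbabilityMeasure μ] [LinearOrder ι]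
    {F : Filtration ι mΩ} {N : ι → Ω → ℝ} (hN : Martingale N F μ) {κ : Type*} [Countable κ]
    {τ : κ → ι} {t : ι} (hτt : ∀ k, τ k ≤ t) (hmean : ∫ ω, N t ω ∂μ = 0) {a : ℝ}
    (hlow : ∀ ω, -a ≤ N t ω) (ε : ℝ≥0) :
    ε * μ {ω | ∃ k, (ε : ℝ) ≤ N (τ k) ω} ≤ ENNReal.ofReal a := by
  have hpos : Submartingale (N ⊔ 0) F μ :=
    hN.submartingale.sup (martingale_zero _ _ _).submartingale
  have ha : 0 ≤ a := by
    simpa [hmean] using integral_mono (integrable_const (-a)) (hN.integrable t) hlow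
  calc ε * μ {ω | ∃ k, (ε : ℝ) ≤ N (τ k) ω}
      ≤ ε * μ {ω | ∃ k, (ε : ℝ) ≤ (N ⊔ 0) (τ k) ω} := by
        gcongr
        exact le_sup_left
    _ ≤ ENNReal.ofReal (∫ ω, (N ⊔ 0) t ω ∂μ) :=
        hpos.mul_measure_exists_ge_le (fun _ _ => le_max_right _ _) hτt ε
    _ ≤ ENNReal.ofReal a := ENNReal.ofReal_le_ofReal ?_
  calc ∫ ω, (N ⊔ 0) t ω ∂μ ≤ ∫ ω, (N t ω + a) ∂μ :=
        integral_mono (hpos.integrable t) ((hN.integrable t).add (integrable_const a))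
          fun ω => max_le (by linarith) (by simp only [Pi.zero_apply]; linarith [hlow ω])
    _ = a := by simp [integral_add (hN.integrable t) (integrable_const a), hmean]

end MeasureTheory

section Generator

variable {d : ℕ}

lemma abs_sum_fin_le {n : ℕ} {f : Fin n → ℝ} {C : ℝ} (h : ∀ k, |f k| ≤ C) :
    |∑ k, f k| ≤ n * C := by
  calc |∑ k, f k| ≤ ∑ k, |f k| := Finset.abs_sum_le_sum_abs _ _
    _ ≤ ∑ _k : Fin n, C := Finset.sum_le_sum fun k _ => h k
    _ = n * C := by simp

lemma abs_amat_le {m : ℕ} {σm : Rd d → Fin m → Matrix (Fin d) (Fin d) ℝ} {K : ℝ}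
    (hσ : ∀ x j k l, |σm x j k l| ≤ K) (x : Rd d) (j : Fin m) (k l : Fin d) :
    |amat σm x j k l| ≤ d * K ^ 2 := by
  simp only [amat, Matrix.mul_apply, Matrix.transpose_apply]
  refine abs_sum_fin_le fun p => ?_
  rw [abs_mul, sq]
  exact mul_le_mul (hσ x j k p) (hσ x j l p) (abs_nonneg _) ((abs_nonneg _).trans (hσ x j k p))

lemma abs_secondOrder_le {a : Rd d → Matrix (Fin d) (Fin d) ℝ} {Ka : ℝ}
    (ha : ∀ x k l, |a x k l| ≤ Ka) {χ : Rd d → ℝ} (hχ : ContDiff ℝ 2 χ) {D : ℝ}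
    (h2 : ∀ y, ‖fderiv ℝ (fderiv ℝ χ) y‖ ≤ D) (x : Rd d) :
    |∑ k, ∑ l, a x k l * fderiv ℝ (fun y => fderiv ℝ χ y (EuclideanSpace.single l 1)) x
      (EuclideanSpace.single k 1)| ≤ d ^ 2 * (Ka * D) := by
  have hterm : ∀ k l, |a x k l * fderiv ℝ (fun y => fderiv ℝ χ y (EuclideanSpace.single l 1)) x
      (EuclideanSpace.single k 1)| ≤ Ka * D := fun k l => by
    rw [abs_mul, fderiv_fderiv_apply hχ, ← Real.norm_eq_abs (fderiv ℝ (fderiv ℝ χ) x _ _)]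
    refine mul_le_mul (ha x k l) ?_ (norm_nonneg _) ((abs_nonneg _).trans (ha x k l))
    calc _ ≤ ‖fderiv ℝ (fderiv ℝ χ) x‖ * ‖EuclideanSpace.single k (1 : ℝ)‖ *
          ‖EuclideanSpace.single l (1 : ℝ)‖ := ContinuousLinearMap.le_opNorm₂ _ _ _
      _ ≤ D := by simpa using h2 x
  calc _ ≤ d * (d * (Ka * D)) := abs_sum_fin_le fun k => abs_sum_fin_le (hterm k)
    _ = d ^ 2 * (Ka * D) := by ring

lemma abs_firstOrder_le {b : Rd d → Rd d} {Kb : ℝ} (hb : ∀ x, ‖b x‖ ≤ Kb) {χ : Rd d → ℝ}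
    {D : ℝ} (h1 : ∀ y, ‖fderiv ℝ χ y‖ ≤ D) (x : Rd d) :
    |∑ k, b x k * fderiv ℝ χ x (EuclideanSpace.single k 1)| ≤ d * (Kb * D) := by
  refine abs_sum_fin_le fun k => ?_
  rw [abs_mul, ← Real.norm_eq_abs (fderiv ℝ χ x _)]
  refine mul_le_mul ((PiLp.norm_apply_le (b x) k).trans (hb x)) ?_ (norm_nonneg _)
    ((norm_nonneg _).trans (hb x))
  simpa using (fderiv ℝ χ x).le_of_opNorm_le (h1 x) (EuclideanSpace.single k (1 : ℝ))

lemma abs_jump_le {ν Pi : Measure (Rd d)} (hν : ν ≤ Pi)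
    (hPi : ∫⁻ z, ENNReal.ofReal (min 1 (‖z‖ ^ 2)) ∂Pi < ⊤) {χ : Rd d → ℝ}
    (hχ : ContDiff ℝ 2 χ) (hχ01 : ∀ y, χ y ∈ Icc 0 1) {D : ℝ} (hD : 1 ≤ D)
    (h2 : ∀ y, ‖fderiv ℝ (fderiv ℝ χ) y‖ ≤ D) (x : Rd d) :
    |∫ z, (χ (x + z) - χ x - (if ‖z‖ < 1 then fderiv ℝ χ x z else 0)) ∂ν| ≤
      D * (∫⁻ z, ENNReal.ofReal (min 1 (‖z‖ ^ 2)) ∂Pi).toReal := by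
  have hD0 : 0 ≤ D := zero_le_one.trans hD
  have hpt : ∀ z : Rd d, ‖χ (x + z) - χ x - (if ‖z‖ < 1 then fderiv ℝ χ x z else 0)‖ ≤
      D * min 1 (‖z‖ ^ 2) := fun z => by
    by_cases hz : ‖z‖ < 1
    · rw [if_pos hz, min_eq_right (by nlinarith [norm_nonneg z])]
      exact norm_sub_sub_fderiv_le hχ h2 x z
    · rw [if_neg hz, min_eq_left (by nlinarith), sub_zero, mul_one, Real.norm_eq_abs]
      obtain ⟨h₁, h₂⟩ := hχ01 (x + z)
      obtain ⟨h₃, h₄⟩ := hχ01 x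
      exact abs_le.2 ⟨by linarith, by linarith⟩
  rw [← Real.norm_eq_abs]
  refine (norm_integral_le_lintegral_norm _).trans (ENNReal.toReal_le_of_le_ofReal
    (by positivity) ?_)
  calc ∫⁻ z, ENNReal.ofReal ‖χ (x + z) - χ x - (if ‖z‖ < 1 then fderiv ℝ χ x z else 0)‖ ∂ν
      ≤ ∫⁻ z, ENNReal.ofReal D * ENNReal.ofReal (min 1 (‖z‖ ^ 2)) ∂Pi :=
        (lintegral_mono fun z => (ENNReal.ofReal_le_ofReal (hpt z)).trans
          (ENNReal.ofReal_mul hD0).le).trans (lintegral_mono' hν le_rfl)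
    _ = ENNReal.ofReal (D * (∫⁻ z, ENNReal.ofReal (min 1 (‖z‖ ^ 2)) ∂Pi).toReal) := by
        rw [lintegral_const_mul' _ _ ENNReal.ofReal_ne_top, ENNReal.ofReal_mul hD0,
          ENNReal.ofReal_toReal hPi.ne]

lemma abs_Lop_le {a : Rd d → Matrix (Fin d) (Fin d) ℝ} {b : Rd d → Rd d}
    {π : Rd d → Measure (Rd d)} {Pi : Measure (Rd d)} {Ka Kb : ℝ}
    (ha : ∀ x k l, |a x k l| ≤ Ka) (hb : ∀ x, ‖b x‖ ≤ Kb) (hπ : ∀ x, π x ≤ Pi)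
    (hPi : ∫⁻ z, ENNReal.ofReal (min 1 (‖z‖ ^ 2)) ∂Pi < ⊤) {χ : Rd d → ℝ}
    (hχ : ContDiff ℝ 2 χ) (hχ01 : ∀ y, χ y ∈ Icc 0 1) {D : ℝ} (hD : 1 ≤ D)
    (h1 : ∀ y, ‖fderiv ℝ χ y‖ ≤ D) (h2 : ∀ y, ‖fderiv ℝ (fderiv ℝ χ) y‖ ≤ D) (x : Rd d) :
    |Lop a b π χ x| ≤
      D * (d ^ 2 * Ka + d * Kb + (∫⁻ z, ENNReal.ofReal (min 1 (‖z‖ ^ 2)) ∂Pi).toReal) := by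
  have h₁ := abs_secondOrder_le ha hχ h2 x
  have h₂ := abs_firstOrder_le hb h1 x
  have h₃ := abs_jump_le (hπ x) hPi hχ hχ01 hD h2 x
  calc |Lop a b π χ x| ≤ d ^ 2 * (Ka * D) + d * (Kb * D) +
        D * (∫⁻ z, ENNReal.ofReal (min 1 (‖z‖ ^ 2)) ∂Pi).toReal :=
        (abs_add_three _ _ _).trans (by linarith)
    _ = _ := by ring

end Generator

section SwitchCutoff

variable {d m : ℕ}

def switchCutoff (χ : Rd d → ℝ) (i : Fin m) (y : Rd d) (j : Fin m) : ℝ :=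
  if j = i then χ y else 1

variable {χ : Rd d → ℝ} {i : Fin m}

lemma switchCutoff_slice_self : (fun y => switchCutoff χ i y i) = χ := by
  funext y; simp [switchCutoff]

lemma switchCutoff_slice_of_ne {j : Fin m} (hj : j ≠ i) :
    (fun y => switchCutoff χ i y j) = fun _ => 1 := by
  funext y; simp [switchCutoff, hj]

lemma switchCutoff_lt_one {U : Set (Rd d)} (hχ1 : EqOn χ 1 Uᶜ) {y : Rd d} {j : Fin m}
    (hy : switchCutoff χ i y j < 1) : j = i ∧ y ∈ U := by
  by_cases hj : j = i
  · subst hj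
    refine ⟨rfl, not_not.1 fun hyU => ?_⟩
    simp [switchCutoff, hχ1 hyU] at hy
  · simp [switchCutoff, hj] at hy

lemma switchCutoff_mem_Icc (hχ01 : ∀ y, χ y ∈ Icc 0 1) (y : Rd d) (j : Fin m) :
    switchCutoff χ i y j ∈ Icc 0 1 := by
  unfold switchCutoff; split_ifs
  exacts [hχ01 y, ⟨zero_le_one, le_rfl⟩]

lemma contDiff_switchCutoff (hχ : ContDiff ℝ 2 χ) (j : Fin m) :
    ContDiff ℝ 2 fun y => switchCutoff χ i y j := by
  by_cases hj : j = i
  · subst hj; rwa [switchCutoff_slice_self]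
  · rw [switchCutoff_slice_of_ne hj]; exact contDiff_const

lemma norm_fderiv_switchCutoff_le {D : ℝ} (hD : 0 ≤ D) (h1 : ∀ y, ‖fderiv ℝ χ y‖ ≤ D)
    (h2 : ∀ y, ‖fderiv ℝ (fderiv ℝ χ) y‖ ≤ D) (j : Fin m) (y : Rd d) :
    ‖fderiv ℝ (fun y' => switchCutoff χ i y' j) y‖ ≤ D ∧
      ‖fderiv ℝ (fderiv ℝ fun y' => switchCutoff χ i y' j) y‖ ≤ D := by
  by_cases hj : j = i
  · subst hj
    rw [switchCutoff_slice_self]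
    exact ⟨h1 y, h2 y⟩
  · rw [switchCutoff_slice_of_ne hj]
    simp [hD, ContinuousLinearMap.opNorm_zero]

lemma switchCutoff_bound (hχ01 : ∀ y, χ y ∈ Icc 0 1) {D : ℝ} (hD : 0 ≤ D)
    (h1 : ∀ y, ‖fderiv ℝ χ y‖ ≤ D) (h2 : ∀ y, ‖fderiv ℝ (fderiv ℝ χ) y‖ ≤ D) (y : Rd d)
    (j : Fin m) :
    |switchCutoff χ i y j| + ‖fderiv ℝ (fun y' => switchCutoff χ i y' j) y‖ +
      ‖fderiv ℝ (fderiv ℝ fun y' => switchCutoff χ i y' j) y‖ ≤ 1 + D + D := by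
  obtain ⟨h₀, h₁⟩ := switchCutoff_mem_Icc hχ01 y j (i := i)
  obtain ⟨h₂, h₃⟩ := norm_fderiv_switchCutoff_le (i := i) hD h1 h2 j y
  rw [abs_of_nonneg h₀]
  linarith

lemma abs_Gbar_switchCutoff_le {σm : Rd d → Fin m → Matrix (Fin d) (Fin d) ℝ}
    {b : Rd d → Fin m → Rd d} {π : Fin m → Rd d → Measure (Rd d)}
    {q : Fin m → Fin m → Rd d → ℝ} {Pi : Measure (Rd d)} {Ka Kb Kq : ℝ}
    (ha : ∀ x j k l, |amat σm x j k l| ≤ Ka) (hb : ∀ x j, ‖b x j‖ ≤ Kb)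
    (hq : ∀ j j' x, |q j j' x| ≤ Kq) (hπ : ∀ j x, π j x ≤ Pi)
    (hPi : ∫⁻ z, ENNReal.ofReal (min 1 (‖z‖ ^ 2)) ∂Pi < ⊤)
    (hχ : ContDiff ℝ 2 χ) (hχ01 : ∀ y, χ y ∈ Icc 0 1) {D : ℝ} (hD : 1 ≤ D)
    (h1 : ∀ y, ‖fderiv ℝ χ y‖ ≤ D) (h2 : ∀ y, ‖fderiv ℝ (fderiv ℝ χ) y‖ ≤ D)
    (y : Rd d) (j : Fin m) :
    |Gbar σm b π q (switchCutoff χ i) y j| ≤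
      D * (d ^ 2 * Ka + d * Kb + (∫⁻ z, ENNReal.ofReal (min 1 (‖z‖ ^ 2)) ∂Pi).toReal) +
        m * Kq := by
  have hI : 0 ≤ (∫⁻ z, ENNReal.ofReal (min 1 (‖z‖ ^ 2)) ∂Pi).toReal := ENNReal.toReal_nonneg
  have hKq : 0 ≤ Kq := (abs_nonneg _).trans (hq j j y)
  have hL : |Lop (fun x => amat σm x j) (fun x => b x j) (π j)
      (fun y' => switchCutoff χ i y' j) y| ≤
      D * (d ^ 2 * Ka + d * Kb + (∫⁻ z, ENNReal.ofReal (min 1 (‖z‖ ^ 2)) ∂Pi).toReal) := by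
    have hψ := norm_fderiv_switchCutoff_le (i := i) (zero_le_one.trans hD) h1 h2 j
    exact abs_Lop_le (fun x => ha x j) (fun x => hb x j) (hπ j) hPi
      (contDiff_switchCutoff hχ j) (fun y => switchCutoff_mem_Icc hχ01 y j) hD
      (fun y => (hψ y).1) (fun y => (hψ y).2) y
  have hQ : |∑ j' ∈ Finset.univ.erase j,
      q j j' y * (switchCutoff χ i y j' - switchCutoff χ i y j)| ≤ m * Kq := by
    refine (Finset.abs_sum_le_sum_abs _ _).trans ((Finset.sum_le_card_nsmul _ _ Kq
      fun j' _ => ?_).trans ?_)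
    · obtain ⟨h₀, h₁⟩ := switchCutoff_mem_Icc hχ01 y j' (i := i)
      obtain ⟨h₂, h₃⟩ := switchCutoff_mem_Icc hχ01 y j (i := i)
      rw [abs_mul]
      exact (mul_le_mul (hq j j' y) (abs_le.2 ⟨by linarith, by linarith⟩) (abs_nonneg _)
        hKq).trans (mul_one _).le
    · rw [nsmul_eq_mul]
      gcongr
      exact_mod_cast (Finset.card_erase_le).trans (by simp)
  exact (abs_add_le _ _).trans (add_le_add hL hQ)

end SwitchCutoff

section Paths

variable {d : ℕ} {Ω : Type} {ω : Ω} {t₁ : ℝ}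

lemma mem_closure_of_forall_rat_gt {E : Type*} [PseudoMetricSpace E] {f : ℝ → E} {t : ℝ}
    (hf : ContinuousWithinAt f (Ici t) t) (ht : t < t₁) {U : Set E}
    (hU : ∀ q : ℚ, t < q → (q : ℝ) < t₁ → f q ∈ U) : f t ∈ closure U := by
  refine Metric.mem_closure_iff.2 fun ε hε => ?_
  obtain ⟨δ, hδ, hfδ⟩ := Metric.continuousWithinAt_iff.1 hf ε hε
  obtain ⟨q, htq, hq⟩ := exists_rat_btwn (lt_min (lt_add_of_pos_right t hδ) ht)
  refine ⟨f q, hU q htq (hq.trans_le (min_le_right _ _)), ?_⟩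
  rw [dist_comm]
  refine hfδ htq.le ?_
  rw [Real.dist_eq, abs_of_pos (sub_pos.2 htq)]
  linarith [min_le_left (t + δ) t₁]

lemma eq_of_forall_rat_gt {α : Type*} {f : ℝ → α} {t : ℝ}
    (hf : ∃ ε > 0, ∀ s ∈ Ico t (t + ε), f s = f t) (ht : t < t₁) {a : α}
    (ha : ∀ q : ℚ, t < q → (q : ℝ) < t₁ → f q = a) : f t = a := by
  obtain ⟨ε, hε, hfε⟩ := hf
  obtain ⟨q, htq, hq⟩ := exists_rat_btwn (lt_min (lt_add_of_pos_right t hε) ht)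
  rw [← hfε q ⟨htq.le, hq.trans_le (min_le_left _ _)⟩]
  exact ha q htq (hq.trans_le (min_le_right _ _))

lemma ofReal_le_exitT {X : ℝ → Ω → Rd d} {D : Set (Rd d)}
    (h : ∀ t, 0 ≤ t → t < t₁ → X t ω ∈ D) : ENNReal.ofReal t₁ ≤ exitT X D ω := by
  refine le_sInf ?_
  rintro _ ⟨t, ⟨ht, htD⟩, rfl⟩
  exact ENNReal.ofReal_le_ofReal (not_lt.1 fun ht₁ => htD (h t ht ht₁))

end Paths

lemma abs_setIntegral_Ioc_le {h : ℝ → ℝ} {K : ℝ} (hK : ∀ s, |h s| ≤ K) {t : ℝ} (ht : 0 ≤ t) :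
    |∫ s in Ioc 0 t, h s| ≤ K * t := by
  simpa [Real.norm_eq_abs, ht] using
    norm_setIntegral_le_of_norm_le_const (μ := volume) (s := Ioc 0 t) (by simp)
      fun s _ => (Real.norm_eq_abs (h s)).trans_le (hK s)

lemma exists_nonneg_forall_of_finite {ι : Type*} [Finite ι] {P : ι → ℝ → Prop}
    (hP : ∀ i K K', K ≤ K' → P i K → P i K') (h : ∀ i, ∃ K, P i K) :
    ∃ K, 0 ≤ K ∧ ∀ i, P i K := by
  choose K hK using h
  obtain ⟨M, hM⟩ := Finite.bddAbove_range K
  exact ⟨max M 0, le_max_right _ _,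
    fun i => hP i _ _ ((hM ⟨i, rfl⟩).trans (le_max_left _ _)) (hK i)⟩

namespace SwitchJD

variable {d m : ℕ} {Ω : Type} [MeasurableSpace Ω] (S : SwitchJD d m Ω) {ω : Ω} {t₁ : ℝ}

lemma ofReal_le_switchT
    (h : ∀ t, 0 < t → t < t₁ → S.Λ t ω = S.Λ 0 ω) : ENNReal.ofReal t₁ ≤ S.switchT ω := by
  refine le_sInf ?_
  rintro _ ⟨t, ⟨ht, htΛ⟩, rfl⟩
  exact ENNReal.ofReal_le_ofReal (not_lt.1 fun ht₁ => htΛ (h t ht ht₁))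

lemma ofReal_le_min_exitT_switchT {U D : Set (Rd d)}
    (hUD : closure U ⊆ D) {i : Fin m} (h0 : S.Λ 0 ω = i)
    (hq : ∀ q : ℚ, 0 ≤ (q : ℝ) → (q : ℝ) < t₁ → S.Λ q ω = i ∧ S.X q ω ∈ U) :
    ENNReal.ofReal t₁ ≤ min (exitT S.X D ω) (S.switchT ω) :=
  le_min (ofReal_le_exitT fun t ht ht₁ => hUD <| mem_closure_of_forall_rat_gt (S.right_cont ω t)
      ht₁ fun q htq hq₁ => (hq q (ht.trans htq.le) hq₁).2)
    (S.ofReal_le_switchT fun t ht ht₁ => h0 ▸ eq_of_forall_rat_gt (S.right_contΛ ω t) ht₁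
      fun q htq hq₁ => (hq q (ht.le.trans htq.le) hq₁).1)

lemma exists_abs_Gbar_switchCutoff_le : ∃ C > 0, ∀ (χ : Rd d → ℝ) (i : Fin m) (D : ℝ),
    ContDiff ℝ 2 χ → (∀ y, χ y ∈ Icc 0 1) → 1 ≤ D → (∀ y, ‖fderiv ℝ χ y‖ ≤ D) →
    (∀ y, ‖fderiv ℝ (fderiv ℝ χ) y‖ ≤ D) →
    ∀ y j, |Gbar S.σm S.b S.π S.q (switchCutoff χ i) y j| ≤ C * D := by
  obtain ⟨Kσ, hKσ0, hKσ⟩ := exists_nonneg_forall_of_finite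
    (fun _ _ _ hK h x k l => (h x k l).trans hK) S.A1σ_bdd
  obtain ⟨Kb, hKb0, hKb⟩ := exists_nonneg_forall_of_finite
    (fun _ _ _ hK h x => (h x).trans hK) S.A1b_bdd
  obtain ⟨Kq, hKq0, hKq⟩ := exists_nonneg_forall_of_finite (ι := Fin m × Fin m)
    (fun _ _ _ hK h x => (h x).trans hK) fun p => S.A1q_bdd p.1 p.2
  obtain ⟨Pi, hπ, hPi⟩ := S.A3
  set I := (∫⁻ z, ENNReal.ofReal (min 1 (‖z‖ ^ 2)) ∂Pi).toReal
  refine ⟨d ^ 2 * (d * Kσ ^ 2) + d * Kb + I + m * Kq + 1, by positivity,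
    fun χ i D hχ hχ01 hD h1 h2 y j => ?_⟩
  have hG := abs_Gbar_switchCutoff_le (i := i) (abs_amat_le fun x j k l => hKσ j x k l)
    (fun x j => hKb j x) (fun j j' x => hKq (j, j') x) hπ hPi hχ hχ01 hD h1 h2 y j
  nlinarith [mul_nonneg (Nat.cast_nonneg m : (0 : ℝ) ≤ m) hKq0]

noncomputable def dynkin (g : Rd d → Fin m → ℝ) (t : ℝ≥0) (ω : Ω) : ℝ :=
  g (S.X t ω) (S.Λ t ω) - ∫ s in Ioc 0 (t : ℝ), Gbar S.σm S.b S.π S.q g (S.X s ω) (S.Λ s ω)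

lemma measurableSet_start (x : Rd d) (i : Fin m) :
    MeasurableSet {ω | S.X 0 ω = x ∧ S.Λ 0 ω = i} :=
  (S.measX 0 (measurableSet_singleton x)).inter (S.measΛ 0 (measurableSet_singleton i))

lemma ae_start (x : Rd d) (i : Fin m) : ∀ᵐ ω ∂(S.P x i), S.X 0 ω = x ∧ S.Λ 0 ω = i :=
  have := S.isProb x i
  mem_ae_iff.2 ((prob_compl_eq_zero_iff (S.measurableSet_start x i)).2 (S.start x i))

lemma martingale_dynkin {g : Rd d → Fin m → ℝ} (hg : ∀ j, ContDiff ℝ 2 fun y => g y j)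
    (hgb : ∃ Kf : ℝ, ∀ y j, |g y j| + ‖fderiv ℝ (fun y' => g y' j) y‖ +
      ‖fderiv ℝ (fderiv ℝ fun y' => g y' j) y‖ ≤ Kf) (x : Rd d) (i : Fin m) :
    Martingale (S.dynkin g) S.F (S.P x i) :=
  S.mart g hg hgb x i

lemma integral_dynkin_eq_zero {g : Rd d → Fin m → ℝ} {x : Rd d} {i : Fin m}
    (hN : Martingale (S.dynkin g) S.F (S.P x i)) (hx : g x i = 0) (t : ℝ≥0) :
    ∫ ω, S.dynkin g t ω ∂(S.P x i) = 0 := by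
  have := S.isProb x i
  have h0 : S.dynkin g 0 =ᵐ[S.P x i] 0 := by
    filter_upwards [S.ae_start x i] with ω hω
    simp [dynkin, hω.1, hω.2, hx]
  rw [← setIntegral_univ, ← hN.setIntegral_eq zero_le MeasurableSet.univ, setIntegral_univ,
    integral_congr_ae h0]
  simp

lemma mul_measureReal_exists_dynkin_ge_le {g : Rd d → Fin m → ℝ} {x : Rd d} {i : Fin m}
    (hN : Martingale (S.dynkin g) S.F (S.P x i)) (hg0 : ∀ y j, 0 ≤ g y j) {K : ℝ}
    (hGK : ∀ y j, |Gbar S.σm S.b S.π S.q g y j| ≤ K) (hx : g x i = 0) {κ : Type*}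
    [Countable κ] {τ : κ → ℝ≥0} {t : ℝ≥0} (hτt : ∀ k, τ k ≤ t) (ε : ℝ≥0) :
    ε * (S.P x i).real {ω | ∃ k, (ε : ℝ) ≤ S.dynkin g (τ k) ω} ≤ K * t := by
  have := S.isProb x i
  have hlow : ∀ ω, -(K * t) ≤ S.dynkin g t ω := fun ω => by
    have := (abs_le.1 (abs_setIntegral_Ioc_le (fun s => hGK (S.X s ω) (S.Λ s ω))
      t.coe_nonneg)).2
    rw [dynkin]
    linarith [hg0 (S.X t ω) (S.Λ t ω)]
  have := ENNReal.toReal_mono ENNReal.ofReal_ne_top <|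
    hN.mul_measure_exists_ge_le hτt (S.integral_dynkin_eq_zero hN hx t) hlow ε
  have hK : 0 ≤ K * t := mul_nonneg ((abs_nonneg _).trans (hGK x i)) t.2
  rwa [ENNReal.toReal_mul, ENNReal.toReal_ofReal hK, ENNReal.coe_toReal, ← measureReal_def]
    at this

lemma exists_measurableSet_forall_rat_lt_one {g : Rd d → Fin m → ℝ} {x : Rd d} {i : Fin m}
    (hN : Martingale (S.dynkin g) S.F (S.P x i)) (hg0 : ∀ y j, 0 ≤ g y j) {K : ℝ} (hK : 0 < K)
    (hGK : ∀ y j, |Gbar S.σm S.b S.π S.q g y j| ≤ K) (hx : g x i = 0) :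
    ∃ G : Set Ω, MeasurableSet G ∧ 2 / 3 ≤ (S.P x i).real G ∧ ∀ ω ∈ G, S.Λ 0 ω = i ∧
      ∀ q : ℚ, 0 ≤ (q : ℝ) → (q : ℝ) ≤ 1 / (4 * K) → g (S.X q ω) (S.Λ q ω) < 1 := by
  have := S.isProb x i
  set t₁ := (1 / (4 * K)).toNNReal
  have hKt₁ : K * t₁ = 1 / 4 := by
    rw [Real.coe_toNNReal _ (by positivity)]
    field_simp
  let τ : ℚ → ℝ≥0 := fun q => min (q : ℝ).toNNReal t₁
  have hτ : ∀ q : ℚ, 0 ≤ (q : ℝ) → (q : ℝ) ≤ 1 / (4 * K) → (τ q : ℝ) = q := fun q h₀ h₁ => by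
    rw [NNReal.coe_min, Real.coe_toNNReal _ h₀, Real.coe_toNNReal _ (by positivity),
      min_eq_left h₁]
  let bad := {ω | ∃ q, ((3 / 4 : ℝ≥0) : ℝ) ≤ S.dynkin g (τ q) ω}
  have hbad : ((3 / 4 : ℝ≥0) : ℝ) * (S.P x i).real bad ≤ 1 / 4 :=
    hKt₁ ▸ S.mul_measureReal_exists_dynkin_ge_le hN hg0 hGK hx (τ := τ)
      (fun q => min_le_right _ t₁) (3 / 4)
  refine ⟨{ω | S.X 0 ω = x ∧ S.Λ 0 ω = i} \ bad, (S.measurableSet_start x i).diff ?_, ?_,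
    fun ω hω => ⟨hω.1.2, fun q hq₀ hq₁ => ?_⟩⟩
  · simp only [bad, ofPred_exists]
    exact MeasurableSet.iUnion fun q => measurableSet_le measurable_const
      ((hN.1 (τ q)).mono (S.F.le _)).measurable
  · have := le_measureReal_sdiff (μ := S.P x i) (s₁ := {ω | S.X 0 ω = x ∧ S.Λ 0 ω = i})
      (s₂ := bad)
    rw [measureReal_def, S.start x i] at this
    norm_num at this hbad
    linarith
  · have hq : S.dynkin g (τ q) ω < 3 / 4 := by
      by_contra h
      exact hω.2 ⟨q, by exact_mod_cast not_lt.1 h⟩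
    have hd := (abs_le.1 (abs_setIntegral_Ioc_le (fun s => hGK (S.X s ω) (S.Λ s ω))
      (τ q).coe_nonneg)).2
    simp only [dynkin, hτ q hq₀ hq₁] at hq hd
    have hKq : K * q ≤ 1 / 4 :=
      (mul_le_mul_of_nonneg_left hq₁ hK.le).trans_eq (by field_simp)
    linarith

theorem ofReal_le_lintegral_min_exitT_switchT {g : Rd d → Fin m → ℝ} {x : Rd d}
    {i : Fin m} (hN : Martingale (S.dynkin g) S.F (S.P x i)) (hg0 : ∀ y j, 0 ≤ g y j) {K : ℝ}
    (hK : 0 < K)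
    (hGK : ∀ y j, |Gbar S.σm S.b S.π S.q g y j| ≤ K) (hx : g x i = 0) {U D : Set (Rd d)}
    (hUD : closure U ⊆ D) (hU : ∀ y j, g y j < 1 → j = i ∧ y ∈ U) :
    ENNReal.ofReal (1 / (6 * K)) ≤ ∫⁻ ω, min (exitT S.X D ω) (S.switchT ω) ∂(S.P x i) := by
  have := S.isProb x i
  obtain ⟨G, hGm, hGμ, hG⟩ := S.exists_measurableSet_forall_rat_lt_one hN hg0 hK hGK hx
  have hmin : ∀ ω ∈ G, ENNReal.ofReal (1 / (4 * K)) ≤ min (exitT S.X D ω) (S.switchT ω) :=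
    fun ω hω => S.ofReal_le_min_exitT_switchT hUD (hG ω hω).1
      fun q hq₀ hq₁ => hU _ _ ((hG ω hω).2 q hq₀ hq₁.le)
  calc ENNReal.ofReal (1 / (6 * K)) = ENNReal.ofReal (1 / (4 * K)) * ENNReal.ofReal (2 / 3) := by
        rw [← ENNReal.ofReal_mul (by positivity)]
        congr 1
        field_simp
        norm_num
    _ ≤ ENNReal.ofReal (1 / (4 * K)) * S.P x i G := by
        rw [← ofReal_measureReal]
        gcongr
    _ = ∫⁻ _ in G, ENNReal.ofReal (1 / (4 * K)) ∂(S.P x i) := (setLIntegral_const _ _).symm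
    _ ≤ ∫⁻ ω in G, min (exitT S.X D ω) (S.switchT ω) ∂(S.P x i) := setLIntegral_mono' hGm hmin
    _ ≤ ∫⁻ ω, min (exitT S.X D ω) (S.switchT ω) ∂(S.P x i) := setLIntegral_le_lintegral _ _

end SwitchJD

/-- Under (A1)-(A3) there exist `r̃₀ ∈ (0,1/2]` and `c > 0`, depending only
on the bounds in (A1)-(A3), such that for every `x₀ ∈ ℝ^d`, `r ∈ (0, r̃₀)`, `i ∈ M`, and
`x ∈ B(x₀, r/2)`, `E_{x,i}(τ_{B(x₀,r)} ∧ τ₁) ≥ c r²`, where `τ₁` is the first switching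
time. -/
theorem statement16 (d m : ℕ) (Ω : Type) [MeasurableSpace Ω] (S : SwitchJD d m Ω) :
    ∃ r₀ c : ℝ, 0 < r₀ ∧ r₀ ≤ 1 / 2 ∧ 0 < c ∧
      ∀ (x₀ : Rd d) (r : ℝ), 0 < r → r < r₀ →
        ∀ i : Fin m, ∀ x ∈ Metric.ball x₀ (r / 2),
          ENNReal.ofReal (c * r ^ 2) ≤
            ∫⁻ ω, min (exitT S.X (Metric.ball x₀ r) ω) (S.switchT ω) ∂(S.P x i) := by
  obtain ⟨B, hB, hcut⟩ := exists_cutoff (E := Rd d)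
  obtain ⟨C, hC, hGbar⟩ := S.exists_abs_Gbar_switchCutoff_le
  refine ⟨1 / 2, 1 / (6 * C * B), by norm_num, le_rfl, by positivity,
    fun x₀ r hr hr₀ i x hx => ?_⟩
  obtain ⟨χ, hχ, hχ0, hχ1, hχ01, h1, h2⟩ := hcut x₀ r hr
  have hr2 : r ^ 2 ≤ r := by nlinarith
  have hD : 1 ≤ B / r ^ 2 := (one_le_div (by positivity)).2 (by nlinarith)
  have h1' : ∀ y, ‖fderiv ℝ χ y‖ ≤ B / r ^ 2 := fun y =>
    (h1 y).trans (div_le_div_of_nonneg_left (by positivity) (by positivity) hr2)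
  have key := S.ofReal_le_lintegral_min_exitT_switchT
    (S.martingale_dynkin (contDiff_switchCutoff hχ)
      ⟨_, switchCutoff_bound hχ01 (by positivity) h1' h2⟩ x i)
    (fun y j => (switchCutoff_mem_Icc hχ01 y j).1) (by positivity)
    (hGbar χ i _ hχ hχ01 hD h1' h2)
    (by simpa [switchCutoff] using hχ0 (Metric.ball_subset_closedBall hx))
    (Metric.closure_ball_subset_closedBall.trans
      (Metric.closedBall_subset_ball (show 3 * r / 4 < r by linarith)))
    fun _ _ => switchCutoff_lt_one hχ1
  convert key using 2
  field_simp
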